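/- Let n ≥ 2 be an even integer, let p ∈ [0,1]^n, and let z ∈ {0,1}^n be the rounded frequency vector defined by z_i = 1 if p_i ≥ 1/2 and z_i = 0 otherwise. Let x be sampled from the univariate model with frequency vector p, and suppose there exists k > 0 such that the probability that x is an optimum of EqualBlocksOneMax is at least n^{-k}. Then Σ_{i=1}^{n} |p_i − z_i| ≤ 2 · k · ln(n). -/

import Mathlib

/-- The probability that the univariate model with frequency vector `p` samples
exactly the bit string `x` (bits are independent, bit `i` is `true` with
probability `p i`). -/
noncomputable def univMass {n : ℕ} (p : Fin n → ℝ) (x : Fin n → Bool) : ℝ :=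
  ∏ i, if x i then p i else 1 - p i

open scoped Classical in
/-- The probability that a sample from the univariate model with frequency
vector `p` satisfies the predicate `A`. -/
noncomputable def univPr {n : ℕ} (p : Fin n → ℝ) (A : (Fin n → Bool) → Prop) : ℝ :=
  ∑ x : Fin n → Bool, if A x then univMass p x else 0

/-- `x` is an optimum of EqualBlocksOneMax on bit strings of length `2 * m`:
every block (pair of positions `2j` and `2j+1`, zero-based) has two equal bits. -/
def IsEBOMOptimum (m : ℕ) (x : Fin (2 * m) → Bool) : Prop :=
  ∀ j : Fin m,
    x ⟨2 * j.1, by have := j.2; omega⟩ = x ⟨2 * j.1 + 1, by have := j.2; omega⟩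

/-!
The optima of EqualBlocksOneMax are exactly the strings that are constant on every block, so
the probability of sampling one factorises over the blocks, block `j` contributing
`p q + (1 - p) (1 - q)` for its two frequencies `p, q`. This is a convex combination of `p` and
`1 - p`, hence at most `max p (1 - p) = 1 - d ≤ exp (-d)`, where `d = min p (1 - p)` is the
distance of `p` to its rounding; the same holds with `q`, and taking the geometric mean gives
`exp (-(d_p + d_q) / 2)`. Altogether `n ^ (-k)` is at most `exp (-D / 2)` for the total distance
`D`, and taking logarithms gives `D ≤ 2 k log n`.
-/

open Finset Real

def PairsAgree {κ : Type*} {n : ℕ} (e : κ × Fin 2 ≃ Fin n) (x : Fin n → Bool) : Prop :=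
  ∀ j, x (e (j, 0)) = x (e (j, 1))

section Factorisation

variable {κ : Type*} {n : ℕ}

lemma univPr_eq_sum_univMass_of_injective {α : Type*} [Fintype α] (p : Fin n → ℝ)
    (A : (Fin n → Bool) → Prop) (E : α → Fin n → Bool) (hE : Function.Injective E)
    (hA : ∀ x, A x ↔ x ∈ Set.range E) :
    univPr p A = ∑ a, univMass p (E a) := by
  classical
  rw [univPr, ← Finset.sum_filter]
  have hfilter : univ.filter A = univ.map ⟨E, hE⟩ := by
    ext x
    simp [hA]
  rw [hfilter, Finset.sum_map]
  rfl

lemma pairsAgree_iff_mem_range (e : κ × Fin 2 ≃ Fin n) (x : Fin n → Bool) :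
    PairsAgree e x ↔ x ∈ Set.range fun y : κ → Bool => y ∘ Prod.fst ∘ e.symm := by
  constructor
  · intro hx
    refine ⟨fun j => x (e (j, 0)), funext fun i => ?_⟩
    obtain ⟨⟨j, b⟩, rfl⟩ := e.surjective i
    fin_cases b
    · simp
    · simpa using hx j
  · rintro ⟨y, rfl⟩ j
    simp

lemma comp_fst_comp_symm_injective (e : κ × Fin 2 ≃ Fin n) :
    Function.Injective fun y : κ → Bool => y ∘ Prod.fst ∘ e.symm := by
  intro y y' h
  funext j
  simpa using congrFun h (e (j, 0))

lemma univPr_pairsAgree [Fintype κ] (e : κ × Fin 2 ≃ Fin n) (p : Fin n → ℝ) :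
    univPr p (PairsAgree e) = ∏ j, (p (e (j, 0)) * p (e (j, 1)) +
      (1 - p (e (j, 0))) * (1 - p (e (j, 1)))) := by
  classical
  rw [univPr_eq_sum_univMass_of_injective p _ _ (comp_fst_comp_symm_injective e)
    (pairsAgree_iff_mem_range e)]
  calc ∑ y : κ → Bool, univMass p (y ∘ Prod.fst ∘ e.symm)
      = ∑ y : κ → Bool, ∏ j, ∏ b : Fin 2,
          if y j then p (e (j, b)) else 1 - p (e (j, b)) := by
        refine sum_congr rfl fun y _ => ?_
        rw [univMass, ← e.prod_comp, Fintype.prod_prod_type]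
        simp
    _ = ∏ j, ∑ c : Bool, ∏ b : Fin 2, if c then p (e (j, b)) else 1 - p (e (j, b)) :=
        (Fintype.prod_sum fun j (c : Bool) =>
          ∏ b : Fin 2, if c then p (e (j, b)) else 1 - p (e (j, b))).symm
    _ = _ := by simp [Fin.prod_univ_two]

end Factorisation

lemma mul_add_one_sub_mul_one_sub_le_max {p q : ℝ} (hq : q ∈ Set.Icc (0 : ℝ) 1) :
    p * q + (1 - p) * (1 - q) ≤ max p (1 - p) := by
  obtain ⟨hq0, hq1⟩ := hq
  nlinarith [le_max_left p (1 - p), le_max_right p (1 - p)]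

lemma max_self_one_sub_le_exp (p : ℝ) : max p (1 - p) ≤ exp (-min p (1 - p)) := by
  have h := add_one_le_exp (-min p (1 - p))
  rcases le_total p (1 - p) with h' | h'
  · rw [max_eq_right h', min_eq_left h'] at *
    linarith
  · rw [max_eq_left h', min_eq_right h'] at *
    linarith

lemma mul_add_one_sub_mul_one_sub_le_exp {p q : ℝ} (hp : p ∈ Set.Icc (0 : ℝ) 1)
    (hq : q ∈ Set.Icc (0 : ℝ) 1) :
    p * q + (1 - p) * (1 - q) ≤ exp (-(min p (1 - p) + min q (1 - q)) / 2) := by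
  set B := p * q + (1 - p) * (1 - q)
  have hB : 0 ≤ B := by
    obtain ⟨hp0, hp1⟩ := hp
    obtain ⟨hq0, hq1⟩ := hq
    positivity
  have hBp : B ≤ exp (-min p (1 - p)) :=
    (mul_add_one_sub_mul_one_sub_le_max hq).trans (max_self_one_sub_le_exp p)
  have hBq : B ≤ exp (-min q (1 - q)) := by
    calc B = q * p + (1 - q) * (1 - p) := by ring
      _ ≤ exp (-min q (1 - q)) :=
        (mul_add_one_sub_mul_one_sub_le_max hp).trans (max_self_one_sub_le_exp q)
  rw [← pow_le_pow_iff_left₀ hB (exp_pos _).le two_ne_zero]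
  calc B ^ 2 = B * B := sq B
    _ ≤ exp (-min p (1 - p)) * exp (-min q (1 - q)) := mul_le_mul hBp hBq hB (exp_pos _).le
    _ = exp (-(min p (1 - p) + min q (1 - q)) / 2) ^ 2 := by
        rw [sq, ← exp_add, ← exp_add]
        ring_nf

lemma univPr_pairsAgree_le_exp {κ : Type*} [Fintype κ] {n : ℕ} (e : κ × Fin 2 ≃ Fin n)
    (p : Fin n → ℝ) (hp : ∀ i, p i ∈ Set.Icc (0 : ℝ) 1) :
    univPr p (PairsAgree e) ≤ exp (-(∑ i, min (p i) (1 - p i)) / 2) := by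
  set d : Fin n → ℝ := fun i => min (p i) (1 - p i)
  calc univPr p (PairsAgree e)
      ≤ ∏ j, exp (-(d (e (j, 0)) + d (e (j, 1))) / 2) := by
        rw [univPr_pairsAgree]
        refine prod_le_prod (fun j _ => ?_)
          (fun j _ => mul_add_one_sub_mul_one_sub_le_exp (hp _) (hp _))
        obtain ⟨h0, h1⟩ := hp (e (j, 0))
        obtain ⟨h0', h1'⟩ := hp (e (j, 1))
        positivity
    _ = exp (-(∑ i, d i) / 2) := by
        rw [← exp_sum, ← e.sum_comp, Fintype.sum_prod_type]
        simp only [Fin.sum_univ_two]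
        rw [← sum_neg_distrib, sum_div]

lemma abs_sub_rounding_eq_min {p : ℝ} (hp : p ∈ Set.Icc (0 : ℝ) 1) {z : Bool}
    (hz : z = true ↔ 1 / 2 ≤ p) :
    |p - if z then 1 else 0| = min p (1 - p) := by
  obtain ⟨hp0, hp1⟩ := hp
  cases z
  · have hp' : p < 1 / 2 := by simpa using hz
    rw [if_neg Bool.false_ne_true, sub_zero, abs_of_nonneg hp0, min_eq_left (by linarith)]
  · have hp' : 1 / 2 ≤ p := by simpa using hz
    rw [if_pos rfl, abs_of_nonpos (by linarith), min_eq_right (by linarith)]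
    ring

/-- Block `j` of a string of length `2 * m` occupies the positions `2 j` and `2 j + 1`. -/
def blockEquiv (m : ℕ) : Fin m × Fin 2 ≃ Fin (2 * m) :=
  finProdFinEquiv.trans (finCongr (Nat.mul_comm m 2))

lemma isEBOMOptimum_eq_pairsAgree (m : ℕ) : IsEBOMOptimum m = PairsAgree (blockEquiv m) := by
  funext x
  simp only [IsEBOMOptimum, PairsAgree, blockEquiv]
  congr! with j
  all_goals simp [finProdFinEquiv_apply_val, add_comm]

theorem l1_dist_le_of_optimum_likely_general
    (m : ℕ) (hm : 1 ≤ m)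
    (p : Fin (2 * m) → ℝ) (hp : ∀ i, p i ∈ Set.Icc (0 : ℝ) 1)
    (z : Fin (2 * m) → Bool) (hz : ∀ i, z i = true ↔ (1 : ℝ) / 2 ≤ p i)
    (k : ℝ)
    (hE : ((2 * m : ℕ) : ℝ) ^ (-k) ≤ univPr p (IsEBOMOptimum m)) :
    ∑ i, |p i - if z i then 1 else 0| ≤ 2 * k * Real.log ((2 * m : ℕ) : ℝ) := by
  have hn : (0 : ℝ) < ((2 * m : ℕ) : ℝ) := Nat.cast_pos.mpr (by omega)
  have hbound : ((2 * m : ℕ) : ℝ) ^ (-k) ≤ exp (-(∑ i, min (p i) (1 - p i)) / 2) := by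
    rw [isEBOMOptimum_eq_pairsAgree] at hE
    exact hE.trans (univPr_pairsAgree_le_exp _ p hp)
  have hlog := log_le_log (rpow_pos_of_pos hn _) hbound
  rw [log_rpow hn, log_exp] at hlog
  rw [sum_congr rfl fun i _ => abs_sub_rounding_eq_min (hp i) (hz i)]
  linarith

theorem l1_dist_le_of_optimum_likely
    (m : ℕ) (hm : 1 ≤ m)
    (p : Fin (2 * m) → ℝ) (hp : ∀ i, p i ∈ Set.Icc (0 : ℝ) 1)
    (z : Fin (2 * m) → Bool) (hz : ∀ i, z i = true ↔ (1 : ℝ) / 2 ≤ p i)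
    (k : ℝ) (hk : 0 < k)
    (hE : ((2 * m : ℕ) : ℝ) ^ (-k) ≤ univPr p (IsEBOMOptimum m)) :
    ∑ i, |p i - if z i then 1 else 0| ≤ 2 * k * Real.log ((2 * m : ℕ) : ℝ) :=
  l1_dist_le_of_optimum_likely_general m hm p hp z hz k hE
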